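/- Let 𝓕 be a finite family of distinct sets with levels 𝓕₁, …, 𝓕_t and auxiliary graph H, and let α be the size of the largest union-free subfamily of 𝓕. If a₁ < a₂ < ⋯ < a_k are the vertices of an independent set in H, then Σ_{j=1}^{k} |𝓕_{a_j}| ≤ α. -/

import Mathlib

open scoped Classical in
/-- The maximal (by inclusion) sets of a family. -/
noncomputable def maxSets (G : Finset (Finset ℕ)) : Finset (Finset ℕ) :=
  G.filter fun X => ∀ Y ∈ G, ¬ X ⊂ Y

/-- `rem F k` is what remains of the family `F` after `k` rounds of peeling off
the maximal sets. -/
noncomputable def rem (F : Finset (Finset ℕ)) : ℕ → Finset (Finset ℕ)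
  | 0 => F
  | k + 1 => rem F k \ maxSets (rem F k)

open scoped Classical in
/-- The length `t` of the longest chain (under inclusion) in the family `F`. -/
noncomputable def famHeight (F : Finset (Finset ℕ)) : ℕ :=
  (Finset.filter (fun C : Finset (Finset ℕ) => IsChain (· ⊆ ·) (C : Set (Finset ℕ))) F.powerset).sup Finset.card

/-- The `i`-th level `𝓕ᵢ` of the family `F`: with `t = famHeight F`,
`𝓕_t` is the family of maximal sets of `F` and, downwards, `𝓕ᵢ` is the family of
maximal sets of `F \ (𝓕_{i+1} ∪ ⋯ ∪ 𝓕_t)`.  A set has *rank* `i` if it lies in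
`level F i`. -/
noncomputable def level (F : Finset (Finset ℕ)) (i : ℕ) : Finset (Finset ℕ) :=
  maxSets (rem F (famHeight F - i))

/-- The auxiliary graph `H = H(F)` on the vertex set `{1, …, t}`, `t = famHeight F`:
the pair `(i, i')` with `i < i'` is an edge if there exist two disjoint chains
`X` and `Y`, each consisting of exactly one set of each rank `j` for `i ≤ j ≤ i' - 1`,
such that at most one set in `{X j ∪ Y k}` has rank `i'` and every other set of this
form has rank greater than `i'` or does not belong to `F`. -/
def HEdge (F : Finset (Finset ℕ)) (i i' : ℕ) : Prop :=
  1 ≤ i ∧ i < i' ∧ i' ≤ famHeight F ∧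
  ∃ X Y : ℕ → Finset ℕ,
    (∀ j, i ≤ j → j < i' → X j ∈ level F j) ∧
    (∀ j, i ≤ j → j < i' → Y j ∈ level F j) ∧
    (∀ j k, i ≤ j → j < k → k < i' → X j ⊂ X k) ∧
    (∀ j k, i ≤ j → j < k → k < i' → Y j ⊂ Y k) ∧
    (∀ j k, i ≤ j → j < i' → i ≤ k → k < i' → X j ≠ Y k) ∧
    (∀ j k, i ≤ j → j < i' → i ≤ k → k < i' →
      X j ∪ Y k ∉ F ∨ X j ∪ Y k ∈ level F i' ∨
        ∃ r, i' < r ∧ r ≤ famHeight F ∧ X j ∪ Y k ∈ level F r) ∧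
    (∀ j₁ k₁ j₂ k₂, i ≤ j₁ → j₁ < i' → i ≤ k₁ → k₁ < i' →
      i ≤ j₂ → j₂ < i' → i ≤ k₂ → k₂ < i' →
      X j₁ ∪ Y k₁ ∈ level F i' → X j₂ ∪ Y k₂ ∈ level F i' →
      X j₁ ∪ Y k₁ = X j₂ ∪ Y k₂)

/-- A family of sets is *union-free* if there are no three distinct sets
`X, Y, Z` in the family with `X ∪ Y = Z`. -/
def UnionFree (F : Finset (Finset ℕ)) : Prop :=
  ∀ X ∈ F, ∀ Y ∈ F, ∀ Z ∈ F, X ≠ Y → X ≠ Z → Y ≠ Z → X ∪ Y ≠ Z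

/-!
The levels indexed by an independent set `I` of `H` together form a union-free subfamily, so
their total size is at most `α`. Suppose `X ∪ Y = Z` inside it, with ranks `a ≤ b < c`.
Extend `X` and `Y` upwards to chains through the ranks `b, …, c - 1`. Every union of a member
of one chain with a member of the other contains `Z`, so it is `Z` itself, lies outside `𝓕`, or
has rank above `c`; and the chains are disjoint because no set of rank below `c` contains `Z`.
Thus `(b, c)` would be an edge of `H`.
-/

open Finset

section Levels

variable {F G : Finset (Finset ℕ)} {A B W X Y Z : Finset ℕ} {a b c i j k m n r : ℕ}

lemma mem_maxSets : A ∈ maxSets G ↔ A ∈ G ∧ ∀ B ∈ G, ¬ A ⊂ B := by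
  simp [maxSets]

lemma maxSets_subset (G : Finset (Finset ℕ)) : maxSets G ⊆ G :=
  fun _ hA => (mem_maxSets.1 hA).1

lemma exists_ssubset_of_notMem_maxSets (hA : A ∈ G) (hmax : A ∉ maxSets G) :
    ∃ B ∈ G, A ⊂ B := by
  by_contra! h
  exact hmax (mem_maxSets.2 ⟨hA, h⟩)

lemma exists_mem_maxSets_superset (hA : A ∈ G) : ∃ B ∈ maxSets G, A ⊆ B := by
  obtain ⟨B, hAB, hB⟩ := G.exists_le_maximal hA
  exact ⟨B, mem_maxSets.2 ⟨hB.prop, fun _ hC => hB.not_gt hC⟩, hAB⟩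

lemma mem_rem_succ : A ∈ rem F (k + 1) ↔ A ∈ rem F k ∧ A ∉ maxSets (rem F k) :=
  mem_sdiff

lemma rem_antitone (F : Finset (Finset ℕ)) : Antitone (rem F) :=
  antitone_nat_of_succ_le fun _ => sdiff_subset

lemma rem_subset (F : Finset (Finset ℕ)) (k : ℕ) : rem F k ⊆ F :=
  rem_antitone F k.zero_le

lemma level_subset (F : Finset (Finset ℕ)) (j : ℕ) : level F j ⊆ F :=
  (maxSets_subset _).trans (rem_subset F _)

lemma mem_rem_succ_of_ssubset (hA : A ∈ F) (hAB : A ⊂ B) (hB : B ∈ rem F k) :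
    A ∈ rem F (k + 1) := by
  induction k with
  | zero => exact mem_rem_succ.2 ⟨hA, fun h => (mem_maxSets.1 h).2 B hB hAB⟩
  | succ k ih =>
    exact mem_rem_succ.2 ⟨ih (rem_antitone F k.le_succ hB), fun h => (mem_maxSets.1 h).2 B hB hAB⟩

lemma notMem_rem_of_mem_maxSets_rem (hA : A ∈ maxSets (rem F k)) (hkm : k < m) :
    A ∉ rem F m :=
  fun h => (mem_rem_succ.1 (rem_antitone F hkm h)).2 hA

lemma eq_of_mem_maxSets_rem (hk : A ∈ maxSets (rem F k)) (hm : A ∈ maxSets (rem F m)) :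
    k = m := by
  by_contra hne
  rcases Nat.lt_or_gt_of_ne hne with h | h
  · exact notMem_rem_of_mem_maxSets_rem hk h (maxSets_subset _ hm)
  · exact notMem_rem_of_mem_maxSets_rem hm h (maxSets_subset _ hk)

lemma lt_of_ssubset_of_mem_maxSets_rem (hA : A ∈ maxSets (rem F k))
    (hB : B ∈ maxSets (rem F m)) (hAB : A ⊂ B) : m < k := by
  by_contra! h
  exact notMem_rem_of_mem_maxSets_rem hA (Nat.lt_succ_of_le h)
    (mem_rem_succ_of_ssubset (rem_subset F k (maxSets_subset _ hA)) hAB (maxSets_subset _ hB))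

lemma exists_ssubset_mem_maxSets_rem (hA : A ∈ rem F (k + 1)) :
    ∃ B ∈ maxSets (rem F k), A ⊂ B := by
  obtain ⟨hA, hmax⟩ := mem_rem_succ.1 hA
  obtain ⟨B, hB, hAB⟩ := exists_ssubset_of_notMem_maxSets hA hmax
  obtain ⟨C, hC, hBC⟩ := exists_mem_maxSets_superset hB
  exact ⟨C, hC, hAB.trans_subset hBC⟩

lemma exists_chain_of_mem_rem (hA : A ∈ rem F k) :
    ∃ C ⊆ F, IsChain (· ⊆ ·) (C : Set (Finset ℕ)) ∧ C.card = k + 1 ∧ ∀ B ∈ C, A ⊆ B := by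
  induction k generalizing A with
  | zero => exact ⟨{A}, by simpa using rem_subset F 0 hA, by simp, by simp, by simp⟩
  | succ k ih =>
    obtain ⟨hA, hmax⟩ := mem_rem_succ.1 hA
    obtain ⟨B, hB, hAB⟩ := exists_ssubset_of_notMem_maxSets hA hmax
    obtain ⟨C, hCF, hC, hcard, hBC⟩ := ih hB
    have hAC : A ∉ C := fun h => hAB.not_subset (hBC A h)
    refine ⟨insert A C, insert_subset (rem_subset F k hA) hCF, ?_,
      by rw [card_insert_of_notMem hAC, hcard], (forall_mem_insert _ _ _).2 ⟨subset_rfl, ?_⟩⟩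
    · rw [coe_insert]
      exact hC.insert fun D hD _ => Or.inl (hAB.subset.trans (hBC D hD))
    · exact fun D hD => hAB.subset.trans (hBC D hD)

open scoped Classical in
lemma lt_famHeight_of_mem_rem (hA : A ∈ rem F k) : k < famHeight F := by
  obtain ⟨C, hCF, hC, hcard, -⟩ := exists_chain_of_mem_rem hA
  have : C.card ≤ famHeight F := le_sup (mem_filter.2 ⟨mem_powerset.2 hCF, hC⟩)
  omega

lemma exists_mem_maxSets_rem (hA : A ∈ F) : ∃ k < famHeight F, A ∈ maxSets (rem F k) := by
  obtain ⟨k, hk, hk'⟩ : ∃ k, A ∈ rem F k ∧ A ∉ rem F (k + 1) := by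
    by_contra! h
    have hall : ∀ k, A ∈ rem F k := fun k => by
      induction k with
      | zero => exact hA
      | succ k ih => exact h k ih
    exact lt_irrefl _ (lt_famHeight_of_mem_rem (hall (famHeight F)))
  refine ⟨k, lt_famHeight_of_mem_rem hk, ?_⟩
  by_contra h
  exact hk' (mem_rem_succ.2 ⟨hk, h⟩)

lemma exists_mem_level (hA : A ∈ F) : ∃ j ∈ Icc 1 (famHeight F), A ∈ level F j := by
  obtain ⟨k, hk, hA⟩ := exists_mem_maxSets_rem hA
  refine ⟨famHeight F - k, mem_Icc.2 ⟨by omega, by omega⟩, ?_⟩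
  rwa [level, Nat.sub_sub_self hk.le]

lemma eq_of_mem_level (hi : i ≤ famHeight F) (hj : j ≤ famHeight F) (hAi : A ∈ level F i)
    (hAj : A ∈ level F j) : i = j := by
  have := eq_of_mem_maxSets_rem hAi hAj
  omega

lemma lt_of_ssubset_of_mem_level (hi : i ≤ famHeight F) (hA : A ∈ level F i)
    (hB : B ∈ level F j) (hAB : A ⊂ B) : i < j := by
  have := lt_of_ssubset_of_mem_maxSets_rem hA hB hAB
  omega

lemma eq_or_lt_of_subset_of_mem_level (hc : c ≤ famHeight F) (hZ : Z ∈ level F c)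
    (hW : W ∈ level F r) (hZW : Z ⊆ W) : W = Z ∨ c < r :=
  (eq_or_ne W Z).imp_right fun h =>
    lt_of_ssubset_of_mem_level hc hZ hW (hZW.ssubset_of_ne (Ne.symm h))

lemma le_of_subset_of_mem_level (hc : c ≤ famHeight F) (hr : r ≤ famHeight F)
    (hZ : Z ∈ level F c) (hW : W ∈ level F r) (hZW : Z ⊆ W) : c ≤ r :=
  (eq_or_lt_of_subset_of_mem_level hc hZ hW hZW).elim
    (fun h => (eq_of_mem_level hc hr hZ (h ▸ hW)).le) le_of_lt

lemma exists_ssubset_mem_level_succ (hj : j < famHeight F) (hA : A ∈ level F j) :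
    ∃ B ∈ level F (j + 1), A ⊂ B := by
  have hA' : A ∈ rem F (famHeight F - (j + 1) + 1) := by
    rw [show famHeight F - (j + 1) + 1 = famHeight F - j by omega]
    exact maxSets_subset _ hA
  exact exists_ssubset_mem_maxSets_rem hA'

lemma exists_chain_through_levels (hA : A ∈ level F a) (han : a ≤ n) (hn : n ≤ famHeight F) :
    ∃ X : ℕ → Finset ℕ, (∀ j, a ≤ j → j ≤ n → X j ∈ level F j ∧ A ⊆ X j) ∧
      ∀ j k, a ≤ j → j < k → k ≤ n → X j ⊂ X k := by
  induction n, han using Nat.le_induction with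
  | base =>
    refine ⟨fun _ => A, fun j hj hja => ?_, fun _ _ _ _ _ => by omega⟩
    rw [le_antisymm hja hj]
    exact ⟨hA, subset_rfl⟩
  | succ n han ih =>
    obtain ⟨X, hXlev, hXmono⟩ := ih (by omega)
    obtain ⟨B, hB, hXB⟩ := exists_ssubset_mem_level_succ (by omega) (hXlev n han le_rfl).1
    have hXB' : ∀ j, a ≤ j → j ≤ n → X j ⊂ B := fun j hj hjn =>
      hjn.lt_or_eq.elim (fun h => (hXmono j n hj h le_rfl).trans hXB) (fun h => h ▸ hXB)
    refine ⟨fun j => if j ≤ n then X j else B, fun j hj hjn => ?_, fun j k hj hjk hkn => ?_⟩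
    · dsimp only
      split_ifs with h
      · exact hXlev j hj h
      · rw [show j = n + 1 by omega]
        exact ⟨hB, (hXlev n han le_rfl).2.trans hXB.subset⟩
    · dsimp only
      split_ifs with hjn hkn
      · exact hXmono j k hj hjk hkn
      · exact hXB' j hj hjn
      all_goals omega

lemma hEdge_of_subset_union (hX : X ∈ level F a) (hY : Y ∈ level F b) (hZ : Z ∈ level F c)
    (hb : 1 ≤ b) (hab : a ≤ b) (hbc : b < c) (hc : c ≤ famHeight F) (hZXY : Z ⊆ X ∪ Y) :
    HEdge F b c := by
  obtain ⟨X', hX'lev, hX'⟩ := exists_chain_through_levels hX (n := c - 1) (by omega) (by omega)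
  obtain ⟨Y', hY'lev, hY'⟩ := exists_chain_through_levels hY (n := c - 1) (by omega) (by omega)
  have hZsub : ∀ j k, b ≤ j → j < c → b ≤ k → k < c → Z ⊆ X' j ∪ Y' k :=
    fun j k hj hjc hk hkc => hZXY.trans
      (union_subset_union (hX'lev j (by omega) (by omega)).2 (hY'lev k hk (by omega)).2)
  have hZeq : ∀ j k r, b ≤ j → j < c → b ≤ k → k < c → X' j ∪ Y' k ∈ level F r →
      X' j ∪ Y' k = Z ∨ c < r := fun j k r hj hjc hk hkc hr =>
    eq_or_lt_of_subset_of_mem_level hc hZ hr (hZsub j k hj hjc hk hkc)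
  refine ⟨hb, hbc, hc, X', Y', fun j hj hjc => (hX'lev j (by omega) (by omega)).1,
    fun j hj hjc => (hY'lev j hj (by omega)).1, fun j k hj hjk hkc => hX' j k (by omega) hjk
    (by omega), fun j k hj hjk hkc => hY' j k hj hjk (by omega), ?_, ?_, ?_⟩
  · intro j k hj hjc hk hkc hXY
    have hZY : Z ⊆ Y' k := by simpa [hXY] using hZsub j k hj hjc hk hkc
    have := le_of_subset_of_mem_level hc (by omega) hZ (hY'lev k hk (by omega)).1 hZY
    omega
  · intro j k hj hjc hk hkc
    by_cases hF : X' j ∪ Y' k ∈ F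
    · obtain ⟨r, hr, hUr⟩ := exists_mem_level hF
      rcases hZeq j k r hj hjc hk hkc hUr with h | h
      · exact Or.inr (Or.inl (h ▸ hZ))
      · exact Or.inr (Or.inr ⟨r, h, (mem_Icc.1 hr).2, hUr⟩)
    · exact Or.inl hF
  · intro j₁ k₁ j₂ k₂ hj₁ hj₁c hk₁ hk₁c hj₂ hj₂c hk₂ hk₂c h₁ h₂
    rw [(hZeq j₁ k₁ c hj₁ hj₁c hk₁ hk₁c h₁).resolve_right (lt_irrefl c),
      (hZeq j₂ k₂ c hj₂ hj₂c hk₂ hk₂c h₂).resolve_right (lt_irrefl c)]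

lemma unionFree_biUnion_level {I : Finset ℕ} (hI : I ⊆ Icc 1 (famHeight F))
    (hind : ∀ x ∈ I, ∀ y ∈ I, ¬ HEdge F x y) : UnionFree (I.biUnion (level F)) := by
  intro X hX Y hY Z hZ _ hXZ hYZ hU
  obtain ⟨a, ha, hXa⟩ := mem_biUnion.1 hX
  obtain ⟨b, hb, hYb⟩ := mem_biUnion.1 hY
  obtain ⟨c, hc, hZc⟩ := mem_biUnion.1 hZ
  have hbounds : ∀ j ∈ I, 1 ≤ j ∧ j ≤ famHeight F := fun j hj => mem_Icc.1 (hI hj)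
  have hac := lt_of_ssubset_of_mem_level (hbounds a ha).2 hXa hZc
    ((hU ▸ subset_union_left).ssubset_of_ne hXZ)
  have hbc := lt_of_ssubset_of_mem_level (hbounds b hb).2 hYb hZc
    ((hU ▸ subset_union_right).ssubset_of_ne hYZ)
  rcases le_total a b with hab | hba
  · exact hind b hb c hc (hEdge_of_subset_union hXa hYb hZc (hbounds b hb).1 hab hbc
      (hbounds c hc).2 hU.ge)
  · exact hind a ha c hc (hEdge_of_subset_union hYb hXa hZc (hbounds a ha).1 hba hac
      (hbounds c hc).2 (union_comm X Y ▸ hU.ge))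

end Levels

/-- First part of Lemma 2: if `α` is the size of the largest union-free subfamily
of `F` and `I` is an independent set in the auxiliary graph `H`, then the sum of
the sizes of the levels indexed by `I` is at most `α`. -/
theorem sum_levels_indep_le (F : Finset (Finset ℕ)) (α : ℕ)
    (hα : IsGreatest {k | ∃ G ⊆ F, UnionFree G ∧ G.card = k} α)
    (I : Finset ℕ) (hI : I ⊆ Finset.Icc 1 (famHeight F))
    (hind : ∀ x ∈ I, ∀ y ∈ I, ¬ HEdge F x y) :
    ∑ j ∈ I, (level F j).card ≤ α := by
  have hdisj : (I : Set ℕ).PairwiseDisjoint (level F) := fun x hx y hy hxy =>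
    disjoint_left.2 fun _ hAx hAy =>
      hxy (eq_of_mem_level (mem_Icc.1 (hI hx)).2 (mem_Icc.1 (hI hy)).2 hAx hAy)
  rw [← card_biUnion hdisj]
  exact hα.2 ⟨_, biUnion_subset.2 fun j _ => level_subset F j, unionFree_biUnion_level hI hind, rfl⟩
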